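/- Let d ≥ 1 be an integer, μ a Borel probability measure on [0,1]^d, and δ > 0. Then h(μ,δ) = liminf_{m→∞} (log₂ h*_{m,δ}(μ))/m. -/

import Mathlib

open MeasureTheory Filter Set
open scoped ENNReal NNReal

/-- The support of a measure on `ℝ^d`: points all of whose closed balls have positive measure. -/
def msupport (d : ℕ) (μ : Measure (Fin d → ℝ)) : Set (Fin d → ℝ) :=
  {x | ∀ r : ℝ, 0 < r → 0 < μ (Metric.closedBall x r)}

/-- `h(μ,δ)`: the supremum of exponents `s` admissible for the lower (quasi-)Assouad condition. -/
noncomputable def hfun (d : ℕ) (μ : Measure (Fin d → ℝ)) (δ : ℝ) : ℝ≥0∞ :=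
  ⨆ (s : ℝ) (_ : ∃ C : ℝ, 0 < C ∧ ∀ x ∈ msupport d μ, ∀ r R : ℝ,
      0 < r → r < R ^ (1 + δ) → R ^ (1 + δ) < R → R < 1 →
      ENNReal.ofReal (C * (R / r) ^ s) ≤ μ (Metric.closedBall x R) / μ (Metric.closedBall x r)),
    ENNReal.ofReal s

/-- The affine map `y ↦ (1/l) • y + u` (magnification of a hypercube of side `l`). -/
noncomputable def miniMap (d : ℕ) (l : ℝ) (u : Fin d → ℝ) : (Fin d → ℝ) → (Fin d → ℝ) :=
  fun y => l⁻¹ • y + u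

/-- The mini-measure of `μ` associated to the affine map `y ↦ (1/l) • y + u`:
the normalized restriction to `[0,1]^d` of the pushforward of `μ`. -/
noncomputable def miniMeasure (d : ℕ) (μ : Measure (Fin d → ℝ)) (l : ℝ) (u : Fin d → ℝ) :
    Measure (Fin d → ℝ) :=
  ((μ.map (miniMap d l u)) (Set.Icc 0 1))⁻¹ • ((μ.map (miniMap d l u)).restrict (Set.Icc 0 1))

/-- One of the `2^d` central closed hypercubes of side `2^{-m}` in `[0,1]^d`
(the closed dyadic hypercubes of generation `m` containing the center `(1/2,...,1/2)`),
indexed by `ε : Fin d → Bool`. -/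
noncomputable def centralCube (d m : ℕ) (ε : Fin d → Bool) : Set (Fin d → ℝ) :=
  Set.Icc (fun i => if ε i then (1 : ℝ) / 2 else 1 / 2 - ((2 : ℝ) ^ m)⁻¹)
    (fun i => if ε i then (1 : ℝ) / 2 + ((2 : ℝ) ^ m)⁻¹ else 1 / 2)

/-- `M_m(μ')`: the maximal `μ'`-measure of the `2^d` central hypercubes of side `2^{-m}`. -/
noncomputable def Mctr (d : ℕ) (μ' : Measure (Fin d → ℝ)) (m : ℕ) : ℝ≥0∞ :=
  ⨆ ε : Fin d → Bool, μ' (centralCube d m ε)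

/-- `h*_{m,δ}(μ)`: infimum of `1 / M_m(μ')` over mini-measures `μ'` of `μ` arising from a
hypercube of side length `l > 2 · 2^{-m/δ}` with `M_m(μ') ≠ 0`. -/
noncomputable def hstar (d : ℕ) (μ : Measure (Fin d → ℝ)) (δ : ℝ) (m : ℕ) : ℝ≥0∞ :=
  ⨅ (l : ℝ) (u : Fin d → ℝ)
    (_ : 0 < l ∧ l ≤ 1 ∧ 2 * (2 : ℝ) ^ (-(m : ℝ) / δ) < l ∧
      0 < (μ.map (miniMap d l u)) (Set.Icc 0 1) ∧ Mctr d (miniMeasure d μ l u) m ≠ 0),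
    (Mctr d (miniMeasure d μ l u) m)⁻¹

noncomputable def log2 (y : ℝ≥0∞) : ℝ≥0∞ :=
  if y = ⊤ then ⊤ else ENNReal.ofReal (Real.logb 2 y.toReal)

/-!
Both inequalities come from blowing a ball `B(x, l/2)` up to `[0,1]^d` by a mini-measure: the
`2^d` central cubes of side `2^{-m}` then cover the image of `B(x, l·2^{-m})`, and any ball of
radius `1/4` centred in them stays inside `[0,1]^d`.

If `μ(B(x,R))/μ(B(x,r)) ≥ C (R/r)^s`, split a central cube into `2^{(k+2)d}` subcubes of side
`2^{-(m+k+2)}` with `k ≥ δ`. One subcube carries a `2^{-(k+2)d}` share of the mass and sits in a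
ball `B(y, r)` around a support point, while `B(y, R)`, `R = l/4`, sits in the blown-up cube, so
`M_m(μ') ≲ (R/r)^{-s} ≈ 2^{-ms}`; the threshold `l > 2·2^{-m/δ}` is what makes `r < R^{1+δ}`.

Conversely, if `h*_{m,δ}(μ) ≥ 2^{mt}` for large `m`, centring the mini-measure at `x` gives
`μ(B(x, l·2^{-m})) ≤ 2^d 2^{-mt} μ(B(x, l/2))`. Given `r < R^{1+δ} < R < 1`, take `l = min(2R, 1)`
and `2^m ≤ l/r < 2^{m+1}`; now `r < R^{1+δ}` is what gives the threshold.
-/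

open Topology

section SupMetric

variable {d : ℕ}

lemma Icc_zero_one_eq_closedBall :
    Icc (0 : Fin d → ℝ) 1 = Metric.closedBall (fun _ => 1 / 2) (1 / 2) := by
  rw [closedBall_pi _ (by norm_num), ← Set.pi_univ_Icc]
  congr 1
  ext i : 1
  rw [Real.closedBall_eq_Icc]
  norm_num

lemma Icc_subset_closedBall_of_mem {p : Fin d → ℝ} {σ : ℝ} (hσ : 0 ≤ σ) {y : Fin d → ℝ}
    (hy : y ∈ Icc p (fun i => p i + σ)) :
    Icc p (fun i => p i + σ) ⊆ Metric.closedBall y σ := fun z hz =>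
  (Real.dist_le_of_mem_pi_Icc hz hy).trans <| (dist_pi_le_iff hσ).2 fun i => by
    rw [Real.dist_eq, abs_sub_comm, add_sub_cancel_left, abs_of_nonneg hσ]

lemma exists_fin_mul_le_le_succ_mul {σ t : ℝ} (hσ : 0 < σ) {n : ℕ} (hn : 0 < n) (ht : 0 ≤ t)
    (htn : t ≤ n * σ) : ∃ j : Fin n, j * σ ≤ t ∧ t ≤ (j + 1) * σ := by
  have hfloor : (⌊t / σ⌋₊ : ℝ) * σ ≤ t := (le_div_iff₀ hσ).1 (Nat.floor_le (by positivity))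
  rcases le_or_gt ⌊t / σ⌋₊ (n - 1) with h | h
  · refine ⟨⟨⌊t / σ⌋₊, by omega⟩, hfloor, (div_le_iff₀ hσ).1 (Nat.lt_floor_add_one _).le⟩
  · refine ⟨⟨n - 1, by omega⟩, le_trans ?_ hfloor, ?_⟩
    · gcongr
    · simpa [Nat.cast_sub (Nat.one_le_of_lt hn)] using htn

lemma Icc_subset_iUnion_Icc {ι : Type*} (a : ι → ℝ) {σ : ℝ} (hσ : 0 < σ) {n : ℕ} (hn : 0 < n) :
    Icc a (fun i => a i + n * σ) ⊆
      ⋃ v : ι → Fin n, Icc (fun i => a i + v i * σ) (fun i => a i + (v i + 1) * σ) := by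
  rintro z ⟨hz₁, hz₂⟩
  choose v hv using fun i =>
    exists_fin_mul_le_le_succ_mul hσ hn (sub_nonneg.2 (hz₁ i)) (sub_le_iff_le_add'.2 (hz₂ i))
  exact mem_iUnion.2 ⟨v, fun i => by linarith [(hv i).1], fun i => by linarith [(hv i).2]⟩

end SupMetric

lemma exists_measure_le_card_mul {α ι : Type*} [MeasurableSpace α] (ν : Measure α) [Fintype ι]
    [Nonempty ι] (S : ι → Set α) {A : Set α} (hA : A ⊆ ⋃ i, S i) :
    ∃ i, ν A ≤ Fintype.card ι * ν (S i) := by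
  obtain ⟨i, hi⟩ := Finite.exists_max fun i => ν (S i)
  refine ⟨i, ?_⟩
  calc ν A ≤ ∑ j, ν (S j) := (measure_mono hA).trans (measure_iUnion_fintype_le ν S)
    _ ≤ Fintype.card ι • ν (S i) := Finset.sum_le_card_nsmul _ _ _ fun j _ => hi j
    _ = Fintype.card ι * ν (S i) := nsmul_eq_mul _ _

lemma exists_subcube_measure_ge {d : ℕ} (ν : Measure (Fin d → ℝ)) (a : Fin d → ℝ) {σ : ℝ}
    (hσ : 0 < σ) {n : ℕ} (hn : 0 < n) :
    ∃ p : Fin d → ℝ, Icc p (fun i => p i + σ) ⊆ Icc a (fun i => a i + n * σ) ∧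
      ν (Icc a (fun i => a i + n * σ)) ≤ (n : ℝ≥0∞) ^ d * ν (Icc p (fun i => p i + σ)) := by
  have : Nonempty (Fin n) := ⟨⟨0, hn⟩⟩
  obtain ⟨v, hv⟩ := exists_measure_le_card_mul ν _ (Icc_subset_iUnion_Icc a hσ hn)
  have hv_le (i : Fin d) : (v i + 1 : ℝ) ≤ n := by exact_mod_cast (v i).isLt
  refine ⟨fun i => a i + v i * σ, fun z hz => ⟨fun i => ?_, fun i => ?_⟩, ?_⟩
  · have := hz.1 i
    dsimp only at this ⊢
    nlinarith [Nat.cast_nonneg (α := ℝ) (v i)]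
  · have := hz.2 i
    dsimp only at this ⊢
    nlinarith [hv_le i]
  · simpa [add_mul, add_assoc] using hv

section CentralCube

variable {d : ℕ}

lemma centralCube_eq_Icc (m : ℕ) (ε : Fin d → Bool) :
    centralCube d m ε = Icc (fun i => if ε i then 1 / 2 else 1 / 2 - ((2 : ℝ) ^ m)⁻¹)
      (fun i => (if ε i then 1 / 2 else 1 / 2 - ((2 : ℝ) ^ m)⁻¹) + ((2 : ℝ) ^ m)⁻¹) := by
  unfold centralCube
  congr 1
  ext i
  split_ifs <;> ring

lemma centralCube_subset_closedBall (m : ℕ) (ε : Fin d → Bool) :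
    centralCube d m ε ⊆ Metric.closedBall (fun _ => 1 / 2) ((2 : ℝ) ^ m)⁻¹ := by
  intro z ⟨hz₁, hz₂⟩
  refine (dist_pi_le_iff (by positivity)).2 fun i => ?_
  have h₁ := hz₁ i
  have h₂ := hz₂ i
  rw [Real.dist_eq, abs_le]
  dsimp only at h₁ h₂
  split_ifs at h₁ h₂ <;> constructor <;> linarith

lemma closedBall_subset_iUnion_centralCube (m : ℕ) :
    Metric.closedBall (fun _ => 1 / 2) ((2 : ℝ) ^ m)⁻¹ ⊆ ⋃ ε, centralCube d m ε := by
  intro z hz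
  refine mem_iUnion.2 ⟨fun i => decide (1 / 2 ≤ z i), fun i => ?_, fun i => ?_⟩ <;>
  · have := abs_le.1 ((Real.dist_eq _ _).symm.trans_le ((dist_le_pi_dist z _ i).trans hz))
    by_cases h : 1 / 2 ≤ z i <;> simp only [h, decide_true, decide_false] <;>
      simp only [if_true, if_false, Bool.false_eq_true] <;> linarith

lemma centralCube_subset_Icc {m : ℕ} (hm : 1 ≤ m) (ε : Fin d → Bool) :
    centralCube d m ε ⊆ Icc 0 1 := by
  refine (centralCube_subset_closedBall m ε).trans ?_
  rw [Icc_zero_one_eq_closedBall]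
  refine Metric.closedBall_subset_closedBall ?_
  rw [one_div, inv_le_inv₀ (by positivity) two_pos]
  simpa using pow_le_pow_right₀ one_le_two hm

end CentralCube

section MiniMeasure

variable {d : ℕ} {μ : Measure (Fin d → ℝ)} {l : ℝ} {u : Fin d → ℝ}

lemma measurable_miniMap : Measurable (miniMap d l u) :=
  ((continuous_const_smul _).add continuous_const).measurable

lemma miniMap_preimage_closedBall (hl : 0 < l) (x : Fin d → ℝ) (ρ : ℝ) :
    miniMap d l u ⁻¹' Metric.closedBall (miniMap d l u x) ρ = Metric.closedBall x (l * ρ) := by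
  ext y
  simp only [mem_preimage, Metric.mem_closedBall, miniMap, dist_add_right, dist_smul₀,
    Real.norm_eq_abs, abs_of_pos (inv_pos.2 hl)]
  rw [inv_mul_le_iff₀ hl]

lemma measure_preimage_miniMap_eq_mul [IsFiniteMeasure μ]
    (hQ : μ (miniMap d l u ⁻¹' Icc 0 1) ≠ 0) {A : Set (Fin d → ℝ)} (hA : MeasurableSet A)
    (hA₁ : A ⊆ Icc 0 1) :
    μ (miniMap d l u ⁻¹' A) = μ (miniMap d l u ⁻¹' Icc 0 1) * miniMeasure d μ l u A := by
  rw [miniMeasure, Measure.smul_apply, Measure.restrict_apply hA, inter_eq_self_of_subset_left hA₁,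
    Measure.map_apply measurable_miniMap hA, Measure.map_apply measurable_miniMap measurableSet_Icc,
    smul_eq_mul, ← mul_assoc, ENNReal.mul_inv_cancel hQ (measure_ne_top _ _), one_mul]

lemma exists_mem_msupport {A : Set (Fin d → ℝ)} (hA : μ A ≠ 0) : ∃ y ∈ A, y ∈ msupport d μ := by
  obtain ⟨y, hyA, hy⟩ := exists_mem_forall_mem_nhdsWithin_pos_measure hA
  exact ⟨y, hyA, fun r hr => hy _ (mem_nhdsWithin_of_mem_nhds (Metric.closedBall_mem_nhds y hr))⟩

lemma miniMeasure_le_of_measure_closedBall_le [IsFiniteMeasure μ]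
    (hQ : μ (miniMap d l u ⁻¹' Icc 0 1) ≠ 0) {A : Set (Fin d → ℝ)} (hA : MeasurableSet A)
    (hA₁ : A ⊆ Icc 0 1) {y : Fin d → ℝ} {r R : ℝ} {c : ℝ≥0∞}
    (hAr : miniMap d l u ⁻¹' A ⊆ Metric.closedBall y r)
    (hRQ : Metric.closedBall y R ⊆ miniMap d l u ⁻¹' Icc 0 1)
    (hc : μ (Metric.closedBall y r) ≤ c * μ (Metric.closedBall y R)) :
    miniMeasure d μ l u A ≤ c := by
  refine (ENNReal.mul_le_mul_iff_right hQ (measure_ne_top _ _)).1 ?_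
  calc μ (miniMap d l u ⁻¹' Icc 0 1) * miniMeasure d μ l u A = μ (miniMap d l u ⁻¹' A) :=
        (measure_preimage_miniMap_eq_mul hQ hA hA₁).symm
    _ ≤ c * μ (Metric.closedBall y R) := (measure_mono hAr).trans hc
    _ ≤ c * μ (miniMap d l u ⁻¹' Icc 0 1) := by gcongr
    _ = μ (miniMap d l u ⁻¹' Icc 0 1) * c := mul_comm _ _

end MiniMeasure

lemma two_mul_rpow_neg_div_lt_iff {δ l : ℝ} (hδ : 0 < δ) (hl : 0 ≤ l) (m : ℕ) :
    2 * (2 : ℝ) ^ (-(m : ℝ) / δ) < l ↔ ((2 : ℝ) ^ m)⁻¹ < (l / 2) ^ δ := by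
  rw [← lt_div_iff₀' two_pos, ← Real.rpow_lt_rpow_iff (by positivity) (by positivity) hδ,
    ← Real.rpow_mul zero_le_two, div_mul_cancel₀ _ hδ.ne', Real.rpow_neg zero_le_two,
    Real.rpow_natCast]

lemma mul_inv_two_pow_lt_rpow {δ l : ℝ} (hδ : 0 < δ) {k m : ℕ} (hk : δ ≤ k) (hl : 0 < l)
    (hth : 2 * (2 : ℝ) ^ (-(m : ℝ) / δ) < l) :
    l * ((2 : ℝ) ^ (m + k + 2))⁻¹ < (l / 4) ^ (1 + δ) := by
  have hm := (two_mul_rpow_neg_div_lt_iff hδ hl.le m).1 hth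
  have hk' : ((2 : ℝ) ^ k)⁻¹ ≤ (1 / 2) ^ δ := by
    rw [← inv_pow, ← one_div, ← Real.rpow_natCast]
    exact Real.rpow_le_rpow_of_exponent_ge (by norm_num) (by norm_num) hk
  calc l * ((2 : ℝ) ^ (m + k + 2))⁻¹ = l / 4 * (((2 : ℝ) ^ m)⁻¹ * ((2 : ℝ) ^ k)⁻¹) := by
        rw [pow_add, pow_add]
        field_simp
        ring
    _ < l / 4 * ((l / 2) ^ δ * (1 / 2) ^ δ) :=
        mul_lt_mul_of_pos_left (mul_lt_mul hm hk' (by positivity) (by positivity)) (by positivity)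
    _ = (l / 4) ^ (1 + δ) := by
        rw [← Real.mul_rpow (by positivity) (by norm_num), Real.rpow_add (by positivity),
          Real.rpow_one]
        ring_nf

def LowerAssouadCondition (d : ℕ) (μ : Measure (Fin d → ℝ)) (δ s C : ℝ) : Prop :=
  ∀ x ∈ msupport d μ, ∀ r R : ℝ, 0 < r → r < R ^ (1 + δ) → R ^ (1 + δ) < R → R < 1 →
    ENNReal.ofReal (C * (R / r) ^ s) ≤ μ (Metric.closedBall x R) / μ (Metric.closedBall x r)

lemma hfun_eq_iSup (d : ℕ) (μ : Measure (Fin d → ℝ)) (δ : ℝ) :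
    hfun d μ δ = ⨆ (s : ℝ) (_ : ∃ C, 0 < C ∧ LowerAssouadCondition d μ δ s C), ENNReal.ofReal s :=
  rfl

namespace LowerAssouadCondition

variable {d : ℕ} {μ : Measure (Fin d → ℝ)} {δ s C l : ℝ} {u : Fin d → ℝ}

lemma measure_closedBall_le [IsFiniteMeasure μ] (h : LowerAssouadCondition d μ δ s C)
    (hC : 0 < C) {x : Fin d → ℝ} (hx : x ∈ msupport d μ) {r R : ℝ} (hr : 0 < r)
    (hrR : r < R ^ (1 + δ)) (hRR : R ^ (1 + δ) < R) (hR : R < 1) :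
    μ (Metric.closedBall x r) ≤
      ENNReal.ofReal (C * (R / r) ^ s)⁻¹ * μ (Metric.closedBall x R) := by
  have hD : 0 < C * (R / r) ^ s := by
    have := hr.trans (hrR.trans hRR)
    positivity
  rw [ENNReal.ofReal_inv_of_pos hD, mul_comm, ← div_eq_mul_inv,
    ENNReal.le_div_iff_mul_le (by simp [hD]) (by simp), mul_comm]
  exact (ENNReal.le_div_iff_mul_le (Or.inl (hx r hr).ne') (Or.inl (measure_ne_top _ _))).1
    (h x hx r R hr hrR hRR hR)

lemma miniMeasure_subcube_le [IsFiniteMeasure μ] (h : LowerAssouadCondition d μ δ s C)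
    (hC : 0 < C) (hδ : 0 < δ) {k m : ℕ} (hk : δ ≤ k) (hm : 2 ≤ m) (hl₀ : 0 < l) (hl₁ : l ≤ 1)
    (hth : 2 * (2 : ℝ) ^ (-(m : ℝ) / δ) < l) (hQ : μ (miniMap d l u ⁻¹' Icc 0 1) ≠ 0)
    {ε : Fin d → Bool} {p : Fin d → ℝ}
    (hpS : Icc p (fun i => p i + ((2 : ℝ) ^ (m + k + 2))⁻¹) ⊆ centralCube d m ε) :
    miniMeasure d μ l u (Icc p fun i => p i + ((2 : ℝ) ^ (m + k + 2))⁻¹) ≤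
      ENNReal.ofReal (C * ((2 : ℝ) ^ m * 2 ^ k) ^ s)⁻¹ := by
  set σ : ℝ := ((2 : ℝ) ^ (m + k + 2))⁻¹ with hσ_def
  have hS₁ := hpS.trans (centralCube_subset_Icc (by omega) ε)
  rcases eq_or_ne (μ (miniMap d l u ⁻¹' Icc p fun i => p i + σ)) 0 with h0 | h0
  · rw [measure_preimage_miniMap_eq_mul hQ measurableSet_Icc hS₁, mul_eq_zero] at h0
    simp [h0.resolve_left hQ]
  obtain ⟨y, hyS, hy⟩ := exists_mem_msupport h0
  refine miniMeasure_le_of_measure_closedBall_le hQ measurableSet_Icc hS₁ (y := y) (r := l * σ)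
    (R := l / 4) ?_ ?_ ?_
  · rw [← miniMap_preimage_closedBall hl₀]
    exact preimage_mono (Icc_subset_closedBall_of_mem (by positivity) hyS)
  · rw [show l / 4 = l * (1 / 4) by ring, ← miniMap_preimage_closedBall hl₀,
      Icc_zero_one_eq_closedBall]
    refine preimage_mono (Metric.closedBall_subset_closedBall' ?_)
    have : ((2 : ℝ) ^ m)⁻¹ ≤ 1 / 4 := by
      rw [one_div, inv_le_inv₀ (by positivity) (by norm_num)]
      exact le_of_eq_of_le (by norm_num) (pow_le_pow_right₀ one_le_two hm)
    linarith [Metric.mem_closedBall.1 (centralCube_subset_closedBall m ε (hpS hyS))]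
  · have hrR := mul_inv_two_pow_lt_rpow hδ hk hl₀ hth
    have hRR : (l / 4) ^ (1 + δ) < l / 4 := by
      simpa using Real.rpow_lt_rpow_of_exponent_gt (by positivity) (by linarith)
        (by linarith : 1 < 1 + δ)
    have := h.measure_closedBall_le hC hy (by positivity) hrR hRR (by linarith)
    rwa [show l / 4 / (l * σ) = (2 : ℝ) ^ m * 2 ^ k by
      rw [hσ_def, pow_add, pow_add]; field_simp; ring] at this

lemma miniMeasure_centralCube_le [IsFiniteMeasure μ] (h : LowerAssouadCondition d μ δ s C)
    (hC : 0 < C) (hδ : 0 < δ) {k m : ℕ} (hk : δ ≤ k) (hm : 2 ≤ m) (hl₀ : 0 < l) (hl₁ : l ≤ 1)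
    (hth : 2 * (2 : ℝ) ^ (-(m : ℝ) / δ) < l) (hQ : μ (miniMap d l u ⁻¹' Icc 0 1) ≠ 0)
    (ε : Fin d → Bool) :
    miniMeasure d μ l u (centralCube d m ε) ≤
      ENNReal.ofReal (((2 : ℝ) ^ (k + 2)) ^ d / (C * ((2 : ℝ) ^ m * 2 ^ k) ^ s)) := by
  have hside : ((2 : ℝ) ^ m)⁻¹ = ((2 ^ (k + 2) : ℕ) : ℝ) * ((2 : ℝ) ^ (m + k + 2))⁻¹ := by
    rw [add_assoc, pow_add]
    push_cast
    field_simp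
    ring
  obtain ⟨p, hpS, hS⟩ := exists_subcube_measure_ge (miniMeasure d μ l u)
    (fun i => if ε i then 1 / 2 else 1 / 2 - ((2 : ℝ) ^ m)⁻¹)
    (σ := ((2 : ℝ) ^ (m + k + 2))⁻¹) (by positivity) (by positivity : 0 < 2 ^ (k + 2))
  rw [← hside, ← centralCube_eq_Icc] at hpS hS
  refine hS.trans ?_
  calc (((2 ^ (k + 2) : ℕ) : ℝ≥0∞)) ^ d *
        miniMeasure d μ l u (Icc p fun i => p i + ((2 : ℝ) ^ (m + k + 2))⁻¹)
      ≤ ENNReal.ofReal (((2 : ℝ) ^ (k + 2)) ^ d) *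
          ENNReal.ofReal (C * ((2 : ℝ) ^ m * 2 ^ k) ^ s)⁻¹ := by
        rw [ENNReal.ofReal_pow (by positivity), ← ENNReal.ofReal_natCast]
        push_cast
        gcongr
        exact h.miniMeasure_subcube_le hC hδ hk hm hl₀ hl₁ hth hQ hpS
    _ = ENNReal.ofReal (((2 : ℝ) ^ (k + 2)) ^ d / (C * ((2 : ℝ) ^ m * 2 ^ k) ^ s)) := by
        rw [← ENNReal.ofReal_mul (by positivity), div_eq_mul_inv]

lemma eventually_ofReal_le_hstar [IsFiniteMeasure μ] (h : LowerAssouadCondition d μ δ s C)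
    (hC : 0 < C) (hδ : 0 < δ) :
    ∃ c : ℝ, 0 < c ∧ ∀ᶠ m : ℕ in atTop, ENNReal.ofReal (c * ((2 : ℝ) ^ m) ^ s) ≤ hstar d μ δ m := by
  obtain ⟨k, hk⟩ := exists_nat_ge δ
  refine ⟨C * ((2 : ℝ) ^ k) ^ s / ((2 : ℝ) ^ (k + 2)) ^ d, by positivity, ?_⟩
  filter_upwards [eventually_ge_atTop 2] with m hm
  refine le_iInf fun l => le_iInf fun u => le_iInf fun ⟨hl₀, hl₁, hth, hQ, _⟩ => ?_
  rw [Measure.map_apply measurable_miniMap measurableSet_Icc] at hQ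
  rw [ENNReal.le_inv_iff_le_inv, ← ENNReal.ofReal_inv_of_pos (by positivity)]
  refine iSup_le fun ε =>
    (h.miniMeasure_centralCube_le hC hδ hk hm hl₀ hl₁ hth hQ.ne' ε).trans_eq ?_
  rw [Real.mul_rpow (by positivity) (by positivity)]
  field_simp

end LowerAssouadCondition

section UpperBound

variable {d : ℕ} {μ : Measure (Fin d → ℝ)} {δ : ℝ}

lemma measure_closedBall_le_of_ofReal_le_hstar [IsFiniteMeasure μ] {a : ℝ} {m : ℕ} (hm : 1 ≤ m)
    (ha₀ : 0 < a) (ha : ENNReal.ofReal a ≤ hstar d μ δ m) {x : Fin d → ℝ}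
    (hx : x ∈ msupport d μ) {l : ℝ} (hl₀ : 0 < l) (hl₁ : l ≤ 1)
    (hth : 2 * (2 : ℝ) ^ (-(m : ℝ) / δ) < l) :
    μ (Metric.closedBall x (l * ((2 : ℝ) ^ m)⁻¹)) ≤
      ENNReal.ofReal (2 ^ d / a) * μ (Metric.closedBall x (l / 2)) := by
  set u : Fin d → ℝ := (fun _ => 1 / 2) - l⁻¹ • x
  have hx_center : miniMap d l u x = fun _ => 1 / 2 := by simp [miniMap, u]
  have hQ : miniMap d l u ⁻¹' Icc 0 1 = Metric.closedBall x (l / 2) := by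
    rw [Icc_zero_one_eq_closedBall, ← hx_center, miniMap_preimage_closedBall hl₀, mul_one_div]
  have hQ₀ : μ (miniMap d l u ⁻¹' Icc 0 1) ≠ 0 := hQ ▸ (hx _ (by positivity)).ne'
  set M := Mctr d (miniMeasure d μ l u) m
  have hB : μ (Metric.closedBall x (l * ((2 : ℝ) ^ m)⁻¹)) ≤
      2 ^ d * (μ (Metric.closedBall x (l / 2)) * M) := by
    calc μ (Metric.closedBall x (l * ((2 : ℝ) ^ m)⁻¹))
        ≤ ∑ ε, μ (miniMap d l u ⁻¹' centralCube d m ε) := by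
          refine (measure_mono ?_).trans (measure_iUnion_fintype_le μ _)
          rw [← preimage_iUnion, ← miniMap_preimage_closedBall hl₀, hx_center]
          exact preimage_mono (closedBall_subset_iUnion_centralCube m)
      _ ≤ ∑ _ε : Fin d → Bool, μ (Metric.closedBall x (l / 2)) * M := by
          gcongr with ε
          rw [measure_preimage_miniMap_eq_mul (A := centralCube d m ε) hQ₀ measurableSet_Icc
            (centralCube_subset_Icc hm ε), hQ]
          gcongr
          exact le_iSup (fun ε => miniMeasure d μ l u (centralCube d m ε)) ε
      _ = 2 ^ d * (μ (Metric.closedBall x (l / 2)) * M) := by simp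
  have hM : M ≤ ENNReal.ofReal a⁻¹ := by
    have hM₀ : M ≠ 0 := fun h0 =>
      (hx (l * ((2 : ℝ) ^ m)⁻¹) (by positivity)).ne' (by simpa [h0] using hB)
    have hQ_pos : 0 < μ.map (miniMap d l u) (Icc 0 1) := by
      rw [Measure.map_apply measurable_miniMap measurableSet_Icc]
      exact pos_iff_ne_zero.2 hQ₀
    rw [ENNReal.ofReal_inv_of_pos ha₀, ENNReal.le_inv_iff_le_inv]
    exact ha.trans (iInf₂_le_of_le l u (iInf_le_of_le ⟨hl₀, hl₁, hth, hQ_pos, hM₀⟩ le_rfl))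
  calc μ (Metric.closedBall x (l * ((2 : ℝ) ^ m)⁻¹))
      ≤ 2 ^ d * (μ (Metric.closedBall x (l / 2)) * ENNReal.ofReal a⁻¹) := hB.trans (by gcongr)
    _ = ENNReal.ofReal (2 ^ d / a) * μ (Metric.closedBall x (l / 2)) := by
        rw [div_eq_mul_inv (2 ^ d : ℝ), ENNReal.ofReal_mul (by positivity),
          ENNReal.ofReal_pow zero_le_two, ENNReal.ofReal_ofNat]
        ring

lemma two_mul_rpow_neg_div_lt_min {r R : ℝ} (hδ : 0 < δ) (hrR : r < R ^ (1 + δ))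
    (hR : 0 < R) {m : ℕ} (hm : δ < m) (hlt : min (2 * R) 1 < 2 ^ (m + 1) * r) :
    2 * (2 : ℝ) ^ (-(m : ℝ) / δ) < min (2 * R) 1 := by
  rw [two_mul_rpow_neg_div_lt_iff hδ (by positivity) m]
  rcases min_cases (2 * R) 1 with ⟨hmin, -⟩ | ⟨hmin, -⟩ <;> rw [hmin] at hlt ⊢
  · calc ((2 : ℝ) ^ m)⁻¹ < r / R := by
          rw [lt_div_iff₀ hR, inv_mul_lt_iff₀ (by positivity)]
          rw [pow_succ] at hlt
          linarith
      _ < R ^ δ := by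
          rwa [div_lt_iff₀ hR, ← Real.rpow_add_one' hR.le (by positivity), add_comm]
      _ = (2 * R / 2) ^ δ := by ring_nf
  · rw [one_div, Real.inv_rpow zero_le_two]
    refine inv_strictAnti₀ (by positivity) ?_
    rw [← Real.rpow_natCast]
    exact Real.rpow_lt_rpow_of_exponent_lt one_lt_two hm

lemma measure_closedBall_le_of_two_pow_near [IsFiniteMeasure μ] {t : ℝ} {m : ℕ} (hδ : 0 < δ)
    (hδm : δ < m)
    (h : ∀ x ∈ msupport d μ, ∀ l : ℝ, 0 < l → l ≤ 1 → 2 * (2 : ℝ) ^ (-(m : ℝ) / δ) < l →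
      μ (Metric.closedBall x (l * ((2 : ℝ) ^ m)⁻¹)) ≤
        ENNReal.ofReal (2 ^ d / ((2 : ℝ) ^ m) ^ t) * μ (Metric.closedBall x (l / 2)))
    {x : Fin d → ℝ} (hx : x ∈ msupport d μ) {r R : ℝ} (hr : 0 < r) (hR : 0 < R)
    (hrR : r < R ^ (1 + δ)) (hm₁ : 2 ^ m ≤ min (2 * R) 1 / r)
    (hm₂ : min (2 * R) 1 / r < 2 ^ (m + 1)) :
    μ (Metric.closedBall x r) ≤
      ENNReal.ofReal (2 ^ d / ((2 : ℝ) ^ m) ^ t) * μ (Metric.closedBall x R) := by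
  have hth := two_mul_rpow_neg_div_lt_min hδ hrR hR hδm ((div_lt_iff₀ hr).1 hm₂)
  have hrl : r ≤ min (2 * R) 1 * ((2 : ℝ) ^ m)⁻¹ := by
    rw [le_mul_inv_iff₀ (by positivity), mul_comm]
    exact (le_div_iff₀ hr).1 hm₁
  refine (measure_mono (Metric.closedBall_subset_closedBall hrl)).trans
    ((h x hx _ (by positivity) (min_le_right _ _) hth).trans ?_)
  gcongr
  linarith [min_le_left (2 * R) 1]

lemma lowerAssouadCondition_of_eventually_measure_closedBall_le [IsFiniteMeasure μ] {t : ℝ}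
    (hδ : 0 < δ) (ht : 0 < t)
    (h : ∀ᶠ m : ℕ in atTop, ∀ x ∈ msupport d μ, ∀ l : ℝ, 0 < l → l ≤ 1 →
      2 * (2 : ℝ) ^ (-(m : ℝ) / δ) < l →
      μ (Metric.closedBall x (l * ((2 : ℝ) ^ m)⁻¹)) ≤
        ENNReal.ofReal (2 ^ d / ((2 : ℝ) ^ m) ^ t) * μ (Metric.closedBall x (l / 2))) :
    ∃ C, 0 < C ∧ LowerAssouadCondition d μ δ t C := by
  obtain ⟨M, hM⟩ := eventually_atTop.1 (h.and (eventually_gt_atTop ⌈δ⌉₊))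
  set C : ℝ := (2 ^ d * 2 ^ t * ((2 : ℝ) ^ M) ^ t)⁻¹
  refine ⟨C, by positivity, fun x hx r R hr hrR hRR hR => ?_⟩
  have hR₀ : 0 < R := hr.trans (hrR.trans hRR)
  rw [ENNReal.le_div_iff_mul_le (Or.inl (hx r hr).ne') (Or.inl (measure_ne_top _ _))]
  have hRl : R ≤ min (2 * R) 1 := le_min (by linarith) hR.le
  obtain ⟨m, hm₁, hm₂⟩ :=
    exists_nat_pow_near ((one_le_div hr).2 ((hrR.trans hRR).le.trans hRl)) one_lt_two
  have hRr : C * (R / r) ^ t ≤ C * (2 ^ t * ((2 : ℝ) ^ m) ^ t) := by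
    rw [← Real.mul_rpow zero_le_two (by positivity), ← pow_succ']
    gcongr
    exact (div_le_div_of_nonneg_right hRl hr.le).trans hm₂.le
  obtain ⟨K, hK₀, hK, hCK⟩ : ∃ K : ℝ, 0 ≤ K ∧
      μ (Metric.closedBall x r) ≤ ENNReal.ofReal K * μ (Metric.closedBall x R) ∧
      C * (R / r) ^ t * K ≤ 1 := by
    rcases lt_or_ge m M with hmM | hmM
    · refine ⟨1, zero_le_one, ?_, ?_⟩
      · simpa using measure_mono (Metric.closedBall_subset_closedBall (hrR.trans hRR).le)
      calc C * (R / r) ^ t * 1 ≤ C * (2 ^ t * ((2 : ℝ) ^ M) ^ t) := by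
            rw [mul_one]
            exact hRr.trans (by gcongr; exact one_le_two)
        _ = (2 ^ d)⁻¹ := by
            simp only [C]
            field_simp
        _ ≤ 1 := inv_le_one_of_one_le₀ (one_le_pow₀ one_le_two)
    · obtain ⟨hD, hδm⟩ := hM m hmM
      refine ⟨_, by positivity, measure_closedBall_le_of_two_pow_near hδ
        ((Nat.le_ceil δ).trans_lt (by exact_mod_cast hδm)) hD hx hr hR₀ hrR hm₁ hm₂, ?_⟩
      calc C * (R / r) ^ t * (2 ^ d / ((2 : ℝ) ^ m) ^ t)
          ≤ C * (2 ^ t * ((2 : ℝ) ^ m) ^ t) * (2 ^ d / ((2 : ℝ) ^ m) ^ t) := by gcongr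
        _ = (((2 : ℝ) ^ M) ^ t)⁻¹ := by
            simp only [C]
            field_simp
        _ ≤ 1 := inv_le_one_of_one_le₀ (Real.one_le_rpow (one_le_pow₀ one_le_two) ht.le)
  calc ENNReal.ofReal (C * (R / r) ^ t) * μ (Metric.closedBall x r)
      ≤ ENNReal.ofReal (C * (R / r) ^ t) * (ENNReal.ofReal K * μ (Metric.closedBall x R)) := by
        gcongr
    _ = ENNReal.ofReal (C * (R / r) ^ t * K) * μ (Metric.closedBall x R) := by
        rw [← mul_assoc, ← ENNReal.ofReal_mul (by positivity)]
    _ ≤ μ (Metric.closedBall x R) := by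
        simpa using mul_le_mul_left (ENNReal.ofReal_le_one.2 hCK) _

end UpperBound

section Log2

lemma ofReal_logb_le_log2 {b : ℝ} (hb : 0 < b) {y : ℝ≥0∞} (h : ENNReal.ofReal b ≤ y) :
    ENNReal.ofReal (Real.logb 2 b) ≤ log2 y := by
  unfold log2
  split_ifs with hy
  · exact le_top
  · exact ENNReal.ofReal_le_ofReal <|
      Real.logb_le_logb_of_le one_lt_two hb ((ENNReal.ofReal_le_iff_le_toReal hy).1 h)

lemma ofReal_two_rpow_le_of_ofReal_le_log2 {a : ℝ} (ha : 0 < a) {y : ℝ≥0∞}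
    (h : ENNReal.ofReal a ≤ log2 y) : ENNReal.ofReal (2 ^ a) ≤ y := by
  unfold log2 at h
  split_ifs at h with hy
  · rw [hy]
    exact le_top
  have hlog : a ≤ Real.logb 2 y.toReal :=
    (ENNReal.ofReal_le_ofReal_iff'.1 h).resolve_right ha.not_ge
  -- `logb 2 0 = 0`, so a positive logarithm forces a positive argument
  have hy0 : 0 < y.toReal := by
    refine ENNReal.toReal_nonneg.lt_of_ne fun h0 => ?_
    rw [← h0, Real.logb_zero] at hlog
    exact ha.not_ge hlog
  rw [← ENNReal.ofReal_toReal hy]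
  exact ENNReal.ofReal_le_ofReal ((Real.le_logb_iff_rpow_le one_lt_two hy0).1 hlog)

variable {H : ℕ → ℝ≥0∞}

lemma ofReal_le_liminf_log2_div {c s : ℝ} (hc : 0 < c)
    (h : ∀ᶠ m : ℕ in atTop, ENNReal.ofReal (c * ((2 : ℝ) ^ m) ^ s) ≤ H m) :
    ENNReal.ofReal s ≤ liminf (fun m : ℕ => log2 (H m) / (m : ℝ≥0∞)) atTop := by
  have hlim : Tendsto (fun m : ℕ => ENNReal.ofReal (s + Real.logb 2 c / m)) atTop
      (𝓝 (ENNReal.ofReal s)) := by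
    simpa using ENNReal.tendsto_ofReal ((tendsto_const_div_atTop_nhds_zero_nat _).const_add s)
  rw [← hlim.liminf_eq]
  refine liminf_le_liminf ?_
  filter_upwards [h, eventually_gt_atTop 0] with m hm hm0
  have hm0' : (0 : ℝ) < m := Nat.cast_pos.2 hm0
  have hlog := ofReal_logb_le_log2 (by positivity) hm
  rw [Real.logb_mul hc.ne' (by positivity), ← Real.rpow_natCast_mul zero_le_two,
    Real.logb_rpow two_pos (by norm_num)] at hlog
  calc ENNReal.ofReal (s + Real.logb 2 c / m) = ENNReal.ofReal (Real.logb 2 c + m * s) / m := by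
        rw [← ENNReal.ofReal_natCast, ← ENNReal.ofReal_div_of_pos hm0']
        congr 1
        field_simp
        ring
    _ ≤ log2 (H m) / m := by gcongr

lemma eventually_ofReal_rpow_le_of_lt_liminf {t : ℝ} (ht : 0 < t)
    (h : ENNReal.ofReal t < liminf (fun m : ℕ => log2 (H m) / (m : ℝ≥0∞)) atTop) :
    ∀ᶠ m : ℕ in atTop, ENNReal.ofReal (((2 : ℝ) ^ m) ^ t) ≤ H m := by
  filter_upwards [eventually_lt_of_lt_liminf h, eventually_gt_atTop 0] with m hm hm0
  rw [← Real.rpow_natCast_mul zero_le_two]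
  refine ofReal_two_rpow_le_of_ofReal_le_log2 (by positivity) ?_
  rw [ENNReal.lt_div_iff_mul_lt (by simp [hm0.ne']) (by simp), ← ENNReal.ofReal_natCast,
    ← ENNReal.ofReal_mul ht.le, mul_comm] at hm
  exact hm.le

end Log2

theorem stmt1 (d : ℕ) (μ : Measure (Fin d → ℝ)) [IsProbabilityMeasure μ] (δ : ℝ) (hδ : 0 < δ) :
    hfun d μ δ =
      Filter.liminf (fun m : ℕ => log2 (hstar d μ δ m) / (m : ℝ≥0∞)) Filter.atTop := by
  rw [hfun_eq_iSup]
  refine le_antisymm (iSup₂_le fun s ⟨C, hC, hs⟩ => ?_)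
    (le_of_forall_lt_imp_le_of_dense fun b hb => ?_)
  · obtain ⟨c, hc, hcs⟩ := hs.eventually_ofReal_le_hstar hC hδ
    exact ofReal_le_liminf_log2_div hc hcs
  rcases eq_or_ne b 0 with rfl | hb₀
  · exact zero_le
  have hb_top := hb.ne_top
  have ht : 0 < b.toReal := ENNReal.toReal_pos hb₀ hb_top
  rw [← ENNReal.ofReal_toReal hb_top] at hb ⊢
  obtain ⟨C, hC, hadm⟩ := lowerAssouadCondition_of_eventually_measure_closedBall_le hδ ht <| by
    filter_upwards [eventually_ofReal_rpow_le_of_lt_liminf ht hb, eventually_ge_atTop 1]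
      with m hm hm₁ x hx l hl₀ hl₁ hth
    exact measure_closedBall_le_of_ofReal_le_hstar hm₁ (by positivity) hm hx hl₀ hl₁ hth
  exact le_iSup₂_of_le b.toReal ⟨C, hC, hadm⟩ le_rfl
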